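/- arXiv:1706.05468 — 2 statements merged into one kernel-verified Lean document; each statement's English description precedes it below -/
import Mathlib

section
/- For adversarial channels Ω1 : X ⇝ Y and Ω2 : Y ⇝ Z, the zero-error capacity of the concatenation satisfies C0(Ω1 ▸ Ω2) ≤ min{ C0(Ω1), C0(Ω2) }. -/
open Set

/-- A code `C` is good for the channel `Ω` if it is nonempty and the fan-out sets of
distinct codewords are disjoint. -/
def IsGoodCode {X Y : Type*} (Ω : X → Set Y) (C : Finset X) : Prop :=
  C.Nonempty ∧ ∀ x ∈ C, ∀ x' ∈ C, x ≠ x' → Ω x ∩ Ω x' = ∅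

/-- The largest cardinality of a good code for `Ω`. -/
noncomputable def maxGoodCode {X Y : Type*} [Fintype X] (Ω : X → Set Y) : ℕ :=
  sSup {n : ℕ | ∃ C : Finset X, IsGoodCode Ω C ∧ C.card = n}

/-- The one-shot capacity of a channel (base-2 logarithm). -/
noncomputable def oneShotCap {X Y : Type*} [Fintype X] (Ω : X → Set Y) : ℝ :=
  Real.logb 2 (maxGoodCode Ω)

/-- The product of two channels. -/
def chProd {X1 Y1 X2 Y2 : Type*} (Ω1 : X1 → Set Y1) (Ω2 : X2 → Set Y2) :
    X1 × X2 → Set (Y1 × Y2) :=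
  fun p => Ω1 p.1 ×ˢ Ω2 p.2

/-- The `n`-th power of a channel. -/
def chPow {X Y : Type*} (Ω : X → Set Y) (n : ℕ) :
    (Fin n → X) → Set (Fin n → Y) :=
  fun x => Set.univ.pi fun k => Ω (x k)

/-- The zero-error capacity of a channel: `sup { C(Ω^n)/n : n ≥ 1 }` (base 2). -/
noncomputable def zeroErrorCap {X Y : Type*} [Fintype X] (Ω : X → Set Y) : ℝ :=
  sSup {r : ℝ | ∃ n : ℕ, 1 ≤ n ∧ r = oneShotCap (chPow Ω n) / n}

/-- Concatenation of channels: `(Ω1 ▸ Ω2)(x) = ⋃_{y ∈ Ω1(x)} Ω2(y)`. -/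
def chConcat {X Y Z : Type*} (Ω1 : X → Set Y) (Ω2 : Y → Set Z) : X → Set Z :=
  fun x => ⋃ y ∈ Ω1 x, Ω2 y

/-- Union of a family of channels with the same alphabets. -/
def chUnion {I X Y : Type*} (Ω : I → X → Set Y) : X → Set Y :=
  fun x => ⋃ i, Ω i x

/-- Channels are isomorphic if there is a bijection of input alphabets preserving the
adjacency function (i.e. preserving nonemptiness of pairwise intersections of fan-out sets). -/
def ChIso {X1 Y1 X2 Y2 : Type*} (Ω1 : X1 → Set Y1) (Ω2 : X2 → Set Y2) : Prop :=
  ∃ f : X1 ≃ X2, ∀ x x' : X1,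
    ((Ω1 x ∩ Ω1 x').Nonempty ↔ (Ω2 (f x) ∩ Ω2 (f x')).Nonempty)

/-- One-shot capacity expressed as a logarithm in base `q`. -/
noncomputable def capBase {X Y : Type*} [Fintype X] (q : ℕ) (Ω : X → Set Y) : ℝ :=
  Real.logb q (maxGoodCode Ω)

/-- Zero-error capacity expressed as a logarithm in base `q`. -/
noncomputable def zeroCapBase {X Y : Type*} [Fintype X] (q : ℕ) (Ω : X → Set Y) : ℝ :=
  sSup {r : ℝ | ∃ n : ℕ, 1 ≤ n ∧ r = capBase q (chPow Ω n) / n}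

/-- The product of a finite family of channels. -/
def chPi {n : ℕ} {X Y : Fin n → Type*} (Ω : ∀ k, X k → Set (Y k)) :
    (∀ k, X k) → Set (∀ k, Y k) :=
  fun x => Set.univ.pi fun k => Ω k (x k)

/-- The `m`-fold concatenation `Ψ 0 ▸ Ψ 1 ▸ ⋯ ▸ Ψ (m-1)` of a chain of channels. -/
def chChain {Z : ℕ → Type*} (Ψ : ∀ i, Z i → Set (Z (i + 1))) : ∀ m, Z 0 → Set (Z m)
  | 0 => fun x => {x}
  | m + 1 => chConcat (chChain Ψ m) (Ψ m)

/-- Concatenation of a list of channels on a fixed alphabet. -/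
def chainList {W : Type*} : List (W → Set W) → (W → Set W)
  | [] => fun x => {x}
  | Ω :: rest => chConcat Ω (chainList rest)

section Aux

variable {X Y : Type*} [Fintype X]

lemma goodSet_bddAbove (Ω : X → Set Y) :
    BddAbove {n : ℕ | ∃ C : Finset X, IsGoodCode Ω C ∧ C.card = n} :=
  ⟨Fintype.card X, by rintro n ⟨C, _, rfl⟩; exact Finset.card_le_univ C⟩

lemma goodSet_nonempty [Nonempty X] (Ω : X → Set Y) :
    {n : ℕ | ∃ C : Finset X, IsGoodCode Ω C ∧ C.card = n}.Nonempty := by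
  refine ⟨1, {Classical.arbitrary X}, ⟨Finset.singleton_nonempty _, ?_⟩,
    Finset.card_singleton _⟩
  intro x hx x' hx' hne
  simp only [Finset.mem_singleton] at hx hx'
  exact absurd (hx.trans hx'.symm) hne

lemma one_le_maxGoodCode [Nonempty X] (Ω : X → Set Y) : 1 ≤ maxGoodCode Ω := by
  obtain ⟨n, C, hC, rfl⟩ := goodSet_nonempty Ω
  have := le_csSup (goodSet_bddAbove Ω) (⟨C, hC, rfl⟩ :
    C.card ∈ {n : ℕ | ∃ C : Finset X, IsGoodCode Ω C ∧ C.card = n})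
  exact le_trans (Finset.one_le_card.mpr hC.1) this

lemma maxGoodCode_le_card [Nonempty X] (Ω : X → Set Y) :
    maxGoodCode Ω ≤ Fintype.card X := by
  refine csSup_le (goodSet_nonempty Ω) ?_
  rintro n ⟨C, _, rfl⟩; exact Finset.card_le_univ C

lemma maxGoodCode_le_of_map {X' Y' : Type*} [Fintype X'] [Nonempty X]
    (Ω : X → Set Y) (Ω' : X' → Set Y')
    (h : ∀ C : Finset X, IsGoodCode Ω C →
      ∃ C' : Finset X', IsGoodCode Ω' C' ∧ C.card ≤ C'.card) :
    maxGoodCode Ω ≤ maxGoodCode Ω' := by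
  refine csSup_le (goodSet_nonempty Ω) ?_
  rintro n ⟨C, hC, rfl⟩
  obtain ⟨C', hC', hcard⟩ := h C hC
  exact hcard.trans (le_csSup (goodSet_bddAbove Ω') ⟨C', hC', rfl⟩)

end Aux

lemma maxGoodCode_concat_le_left {X Y Z : Type*} [Fintype X]
    [Nonempty X]
    (Ω1 : X → Set Y) (Ω2 : Y → Set Z) (h2 : ∀ y, (Ω2 y).Nonempty) (n : ℕ) :
    maxGoodCode (chPow (chConcat Ω1 Ω2) n) ≤ maxGoodCode (chPow Ω1 n) := by
  refine maxGoodCode_le_of_map _ _ ?_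
  intro C hC
  refine ⟨C, ⟨hC.1, ?_⟩, le_rfl⟩
  intro x hx x' hx' hne
  by_contra hcon
  obtain ⟨y, hy, hy'⟩ := Set.nonempty_iff_ne_empty.mpr hcon
  have hdisj := hC.2 x hx x' hx' hne
  set z : Fin n → Z := fun k => (h2 (y k)).choose with hz
  have hzmem : ∀ k, z k ∈ Ω2 (y k) := fun k => (h2 (y k)).choose_spec
  have hz1 : z ∈ chPow (chConcat Ω1 Ω2) n x := by
    intro k _
    exact Set.mem_biUnion (hy k (Set.mem_univ k)) (hzmem k)
  have hz2 : z ∈ chPow (chConcat Ω1 Ω2) n x' := by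
    intro k _
    exact Set.mem_biUnion (hy' k (Set.mem_univ k)) (hzmem k)
  exact absurd hdisj (Set.nonempty_iff_ne_empty.mp ⟨z, hz1, hz2⟩)

lemma maxGoodCode_concat_le_right {X Y Z : Type*} [Fintype X] [Fintype Y]
    [Nonempty X]
    (Ω1 : X → Set Y) (Ω2 : Y → Set Z)
    (h1 : ∀ x, (Ω1 x).Nonempty) (h2 : ∀ y, (Ω2 y).Nonempty) (n : ℕ) :
    maxGoodCode (chPow (chConcat Ω1 Ω2) n) ≤ maxGoodCode (chPow Ω2 n) := by
  classical
  refine maxGoodCode_le_of_map _ _ ?_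
  intro C hC
  set g : (Fin n → X) → (Fin n → Y) := fun x k => (h1 (x k)).choose with hg
  have hgmem : ∀ x k, g x k ∈ Ω1 (x k) := fun x k => (h1 (x k)).choose_spec
  have hsub : ∀ x : Fin n → X, chPow Ω2 n (g x) ⊆ chPow (chConcat Ω1 Ω2) n x := by
    intro x z hz k _
    exact Set.mem_biUnion (hgmem x k) (hz k (Set.mem_univ k))
  have hne : ∀ x, (chPow Ω2 n (g x)).Nonempty := by
    intro x
    refine ⟨fun k => (h2 (g x k)).choose, ?_⟩
    intro k _
    exact (h2 (g x k)).choose_spec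
  have hkey : ∀ x ∈ C, ∀ x' ∈ C, g x = g x' → x = x' := by
    intro x hx x' hx' heq
    by_contra hcon
    have hdisj := hC.2 x hx x' hx' hcon
    obtain ⟨z, hz⟩ := hne x
    have hz' : z ∈ chPow Ω2 n (g x') := heq ▸ hz
    exact absurd hdisj (Set.nonempty_iff_ne_empty.mp
      ⟨z, hsub x hz, hsub x' hz'⟩)
  refine ⟨C.image g, ⟨hC.1.image g, ?_⟩, ?_⟩
  · intro a ha a' ha' hane
    simp only [Finset.mem_image] at ha ha'
    obtain ⟨x, hx, rfl⟩ := ha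
    obtain ⟨x', hx', rfl⟩ := ha'
    have hxne : x ≠ x' := fun h => hane (h ▸ rfl)
    have hdisj := hC.2 x hx x' hx' hxne
    refine Set.eq_empty_iff_forall_notMem.mpr fun z hz => ?_
    exact absurd hdisj (Set.nonempty_iff_ne_empty.mp
      ⟨z, hsub x hz.1, hsub x' hz.2⟩)
  · exact le_of_eq (Finset.card_image_of_injOn hkey).symm

lemma oneShotCap_le_of_maxGoodCode_le {X X' Y Y' : Type*} [Fintype X] [Fintype X']
    [Nonempty X] (Ω : X → Set Y) (Ω' : X' → Set Y')
    (h : maxGoodCode Ω ≤ maxGoodCode Ω') : oneShotCap Ω ≤ oneShotCap Ω' := by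
  unfold oneShotCap
  have h0 : (0 : ℝ) < (maxGoodCode Ω : ℝ) := by
    exact_mod_cast Nat.lt_of_lt_of_le Nat.zero_lt_one (one_le_maxGoodCode Ω)
  exact Real.logb_le_logb_of_le (by norm_num) h0 (by exact_mod_cast h)

lemma zeroErrorCap_bddAbove {X Y : Type*} [Fintype X] [Nonempty X] (Ω : X → Set Y) :
    BddAbove {r : ℝ | ∃ n : ℕ, 1 ≤ n ∧ r = oneShotCap (chPow Ω n) / n} := by
  refine ⟨Real.logb 2 (Fintype.card X), ?_⟩
  rintro r ⟨n, hn, rfl⟩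
  have hnpos : (0 : ℝ) < n := by exact_mod_cast hn
  rw [div_le_iff₀ hnpos]
  have hle : (maxGoodCode (chPow Ω n) : ℝ) ≤ (Fintype.card X : ℝ) ^ n := by
    have := maxGoodCode_le_card (chPow Ω n)
    calc (maxGoodCode (chPow Ω n) : ℝ) ≤ (Fintype.card (Fin n → X) : ℝ) := by
          exact_mod_cast this
      _ = (Fintype.card X : ℝ) ^ n := by
          rw [Fintype.card_fun, Fintype.card_fin]; push_cast; ring
  have h1 : (1 : ℝ) ≤ (maxGoodCode (chPow Ω n) : ℝ) := by
    exact_mod_cast one_le_maxGoodCode (chPow Ω n)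
  calc oneShotCap (chPow Ω n)
      ≤ Real.logb 2 ((Fintype.card X : ℝ) ^ n) :=
        Real.logb_le_logb_of_le (by norm_num) (by linarith) hle
    _ = n * Real.logb 2 (Fintype.card X) := by
        rw [Real.logb_pow]
    _ = Real.logb 2 (Fintype.card X) * n := by ring

/-- `C0(Ω1 ▸ Ω2) ≤ min{C0(Ω1), C0(Ω2)}`. -/
theorem zeroErrorCap_chConcat_le_min {X Y Z : Type*}
    [Fintype X] [Fintype Y] [Fintype Z] [Nonempty X] [Nonempty Y] [Nonempty Z]
    (Ω1 : X → Set Y) (Ω2 : Y → Set Z)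
    (h1 : ∀ x, (Ω1 x).Nonempty) (h2 : ∀ y, (Ω2 y).Nonempty) :
    zeroErrorCap (chConcat Ω1 Ω2) ≤ min (zeroErrorCap Ω1) (zeroErrorCap Ω2) := by
  have hne : {r : ℝ | ∃ n : ℕ, 1 ≤ n ∧
      r = oneShotCap (chPow (chConcat Ω1 Ω2) n) / n}.Nonempty :=
    ⟨oneShotCap (chPow (chConcat Ω1 Ω2) 1) / (1 : ℕ), 1, le_rfl, rfl⟩
  refine csSup_le hne ?_
  rintro r ⟨n, hn, rfl⟩
  have hnpos : (0 : ℝ) < n := by exact_mod_cast hn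
  refine le_min ?_ ?_
  · refine le_csSup_of_le (zeroErrorCap_bddAbove Ω1) ⟨n, hn, rfl⟩ ?_
    exact (div_le_div_iff_of_pos_right hnpos).mpr
      (oneShotCap_le_of_maxGoodCode_le _ _
        (maxGoodCode_concat_le_left Ω1 Ω2 h2 n))
  · refine le_csSup_of_le (zeroErrorCap_bddAbove Ω2) ⟨n, hn, rfl⟩ ?_
    exact (div_le_div_iff_of_pos_right hnpos).mpr
      (oneShotCap_le_of_maxGoodCode_le _ _
        (maxGoodCode_concat_le_right Ω1 Ω2 h1 h2 n))
end

section
/- Let L ≥ 1, let U_1,...,U_L ⊆ {1,...,s} be pairwise disjoint, and let t = (t_1,...,t_L), e = (e_1,...,e_L) be tuples of nonnegative integers. For every integer n ≥ 1 one has C(H_{t,e}⟨U⟩^{n,rest}) ≤ n·( s − Σ_{ℓ=1}^L min{2t_ℓ + e_ℓ, |U_ℓ|} ); in particular C(H_{t,e}⟨U⟩) ≤ C0(H_{t,e}⟨U⟩) ≤ C0_rest(H_{t,e}⟨U⟩) ≤ s − Σ_{ℓ=1}^L min{2t_ℓ + e_ℓ, |U_ℓ|}. -/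
open Set

/-- The `U`-discrepancy between `y ∈ Â^s` and `x ∈ A^s`: the number of positions of `U`
where `y` carries an alphabet symbol different from the one of `x`. -/
def discrepancy {A : Type*} [DecidableEq A] {s : ℕ}
    (y : Fin s → Option A) (x : Fin s → A) (U : Finset (Fin s)) : ℕ :=
  (U.filter fun i => y i ≠ none ∧ y i ≠ some (x i)).card

/-- The `U`-erasure weight of `y ∈ Â^s`. -/
def erasureWeight {A : Type*} [DecidableEq A] {s : ℕ}
    (y : Fin s → Option A) (U : Finset (Fin s)) : ℕ :=
  (U.filter fun i => y i = none).card

/-- The Hamming-type channel `H_{t,e}⟨U⟩ : A^s ⇝ Â^s` of a single adversary acting on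
the coordinates in `U` with error power `t` and erasure power `e`. -/
def HP {A : Type*} [DecidableEq A] {s : ℕ} (t e : ℕ) (U : Finset (Fin s)) :
    (Fin s → A) → Set (Fin s → Option A) :=
  fun x => {y | (∀ i, i ∉ U → y i = some (x i)) ∧
    discrepancy y x U ≤ t ∧ erasureWeight y U ≤ e}

/-- The Hamming-type channel `H_{t,e}⟨U⟩ : A^s ⇝ Â^s` of `L` adversaries acting on the
coordinate sets `U 0, ..., U (L-1)` with error powers `t` and erasure powers `e`. -/
def HB {A : Type*} [DecidableEq A] {s L : ℕ} (t e : Fin L → ℕ)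
    (U : Fin L → Finset (Fin s)) :
    (Fin s → A) → Set (Fin s → Option A) :=
  fun x => {y | (∀ i, (∀ ℓ, i ∉ U ℓ) → y i = some (x i)) ∧
    ∀ ℓ, discrepancy y x (U ℓ) ≤ t ℓ ∧ erasureWeight y (U ℓ) ≤ e ℓ}

/-- `β(A,u,d)`: base-`|A|` logarithm of the largest cardinality of a code `C ⊆ A^u`
with `|C| ≥ 2` and minimum Hamming distance at least `d` (and `0` if no such code exists,
since then the `sSup` is `0`). -/
noncomputable def betaParam (A : Type*) [Fintype A] [DecidableEq A] (u d : ℕ) : ℝ :=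
  Real.logb (Fintype.card A)
    ((sSup {n : ℕ | ∃ C : Finset (Fin u → A), 2 ≤ C.card ∧
      (∀ x ∈ C, ∀ x' ∈ C, x ≠ x' → d ≤ hammingDist x x') ∧ C.card = n} : ℕ) : ℝ)

/-- The compound channel `H_{t,e}⟨U⟩^{n,rest}`: union of the `n`-th powers of the channels
`H_{t,e}⟨V⟩` over all `V` with `V ℓ ⊆ U ℓ` and `|V ℓ| ≤ t ℓ + e ℓ`. -/
def HBcomp {A : Type*} [DecidableEq A] {s L : ℕ} (t e : Fin L → ℕ)
    (U : Fin L → Finset (Fin s)) (n : ℕ) :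
    (Fin n → Fin s → A) → Set (Fin n → Fin s → Option A) :=
  fun x => ⋃ (V : Fin L → Finset (Fin s))
      (_ : ∀ ℓ, V ℓ ⊆ U ℓ ∧ (V ℓ).card ≤ t ℓ + e ℓ),
    chPow (HB t e V) n x

/-- The compound zero-error capacity of `H_{t,e}⟨U⟩`, base `q`. -/
noncomputable def compoundCapBase (A : Type*) [Fintype A] [DecidableEq A] {s L : ℕ}
    (q : ℕ) (t e : Fin L → ℕ) (U : Fin L → Finset (Fin s)) : ℝ :=
  sSup {r : ℝ | ∃ n : ℕ, 1 ≤ n ∧ r = capBase q (HBcomp (A := A) t e U n) / n}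

section Aux

lemma maxGoodCode_bddAbove' {X Y : Type*} [Fintype X] (Ω : X → Set Y) :
    BddAbove {n : ℕ | ∃ C : Finset X, IsGoodCode Ω C ∧ C.card = n} :=
  ⟨Fintype.card X, by rintro b ⟨C, _, rfl⟩; exact Finset.card_le_univ C⟩

lemma maxGoodCode_le_of_card {X Y : Type*} [Fintype X] (Ω : X → Set Y) (M : ℕ)
    (h : ∀ C : Finset X, IsGoodCode Ω C → C.card ≤ M) : maxGoodCode Ω ≤ M := by
  refine csSup_le' ?_
  rintro b ⟨C, hC, rfl⟩
  exact h C hC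

lemma capBase_nonneg' {X Y : Type*} [Fintype X] {q : ℕ} (hq : 2 ≤ q) (Ω : X → Set Y) :
    0 ≤ capBase q Ω := by
  unfold capBase
  rcases Nat.eq_zero_or_pos (maxGoodCode Ω) with h | h
  · simp [h]
  · exact Real.logb_nonneg (by exact_mod_cast one_lt_two.trans_le hq)
      (by exact_mod_cast h)

lemma capBase_mono' {X X' Y Y' : Type*} [Fintype X] [Fintype X'] {q : ℕ} (hq : 2 ≤ q)
    (Ω : X → Set Y) (Ω' : X' → Set Y')
    (h : maxGoodCode Ω ≤ maxGoodCode Ω') : capBase q Ω ≤ capBase q Ω' := by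
  rcases Nat.eq_zero_or_pos (maxGoodCode Ω) with h0 | h0
  · have : capBase q Ω = 0 := by simp [capBase, h0]
    rw [this]; exact capBase_nonneg' hq Ω'
  · unfold capBase
    exact Real.logb_le_logb_of_le (by exact_mod_cast one_lt_two.trans_le hq)
      (by exact_mod_cast h0) (by exact_mod_cast h)

lemma capBase_le_of_card' {X Y : Type*} [Fintype X] {q : ℕ} (hq : 2 ≤ q)
    (Ω : X → Set Y) (K : ℕ)
    (h : ∀ C : Finset X, IsGoodCode Ω C → C.card ≤ q ^ K) :
    capBase q Ω ≤ K := by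
  have hM := maxGoodCode_le_of_card Ω (q ^ K) h
  have hq1 : (1 : ℝ) < q := by exact_mod_cast one_lt_two.trans_le hq
  rcases Nat.eq_zero_or_pos (maxGoodCode Ω) with h0 | h0
  · simp [capBase, h0]
  · unfold capBase
    calc Real.logb q (maxGoodCode Ω) ≤ Real.logb q ((q : ℝ) ^ K) := by
          refine Real.logb_le_logb_of_le hq1 (by exact_mod_cast h0) ?_
          exact_mod_cast hM
      _ = K := by
          rw [Real.logb_pow, Real.logb_self_eq_one hq1, mul_one]

/-- Monotonicity of the single-shot Hamming channel in the adversary sets. -/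
lemma HB_mono {A : Type*} [DecidableEq A] {s L : ℕ} (t e : Fin L → ℕ)
    {U V : Fin L → Finset (Fin s)}
    (hU : ∀ ℓ ℓ', ℓ ≠ ℓ' → Disjoint (U ℓ) (U ℓ')) (hVU : ∀ ℓ, V ℓ ⊆ U ℓ)
    (x : Fin s → A) : HB t e V x ⊆ HB t e U x := by
  rintro y ⟨hy1, hy2⟩
  have key : ∀ ℓ, ∀ i ∈ U ℓ, i ∉ V ℓ → y i = some (x i) := by
    intro ℓ i hiU hiV
    refine hy1 i fun ℓ' hℓ' => ?_
    rcases eq_or_ne ℓ' ℓ with rfl | hne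
    · exact hiV hℓ'
    · exact absurd hiU (Finset.disjoint_left.mp (hU ℓ' ℓ hne) (hVU ℓ' hℓ'))
  refine ⟨fun i hi => hy1 i fun ℓ h => hi ℓ (hVU ℓ h), fun ℓ => ?_⟩
  constructor
  · refine le_trans (Finset.card_le_card ?_) (hy2 ℓ).1
    intro i hi
    simp only [discrepancy, Finset.mem_filter] at hi ⊢
    refine ⟨?_, hi.2⟩
    by_contra hiV
    exact hi.2.2 (key ℓ i hi.1 hiV)
  · refine le_trans (Finset.card_le_card ?_) (hy2 ℓ).2
    intro i hi
    simp only [erasureWeight, Finset.mem_filter] at hi ⊢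
    refine ⟨?_, hi.2⟩
    by_contra hiV
    have := key ℓ i hi.1 hiV
    rw [hi.2] at this
    exact Option.some_ne_none _ this.symm

lemma HBcomp_subset {A : Type*} [DecidableEq A] {s L : ℕ} (t e : Fin L → ℕ)
    (U : Fin L → Finset (Fin s))
    (hU : ∀ ℓ ℓ', ℓ ≠ ℓ' → Disjoint (U ℓ) (U ℓ')) (n : ℕ)
    (z : Fin n → Fin s → A) :
    HBcomp (A := A) t e U n z ⊆ chPow (HB t e U) n z := by
  intro y hy
  simp only [HBcomp, Set.mem_iUnion] at hy
  obtain ⟨V, hV, hy⟩ := hy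
  intro k hk
  exact HB_mono t e hU (fun ℓ => (hV ℓ).1) (z k) (hy k hk)

/-- The core counting lemma: every good code for the compound channel has at most
`|A|^(n (s - Σ min(2tℓ+eℓ, |Uℓ|)))` elements. -/
lemma goodCode_card_le {A : Type*} [Fintype A] [DecidableEq A] {s L : ℕ}
    (U : Fin L → Finset (Fin s))
    (hU : ∀ ℓ ℓ', ℓ ≠ ℓ' → Disjoint (U ℓ) (U ℓ'))
    (t e : Fin L → ℕ) (n : ℕ) (C : Finset (Fin n → Fin s → A))
    (hC : IsGoodCode (HBcomp (A := A) t e U n) C) :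
    C.card ≤ (Fintype.card A) ^ (n * (s - ∑ ℓ, min (2 * t ℓ + e ℓ) ((U ℓ).card))) := by
  classical
  set m : Fin L → ℕ := fun ℓ => min (2 * t ℓ + e ℓ) ((U ℓ).card) with hm
  have hmle : ∀ ℓ, m ℓ ≤ (U ℓ).card := fun ℓ => min_le_right _ _
  have hm2te : ∀ ℓ, m ℓ ≤ 2 * t ℓ + e ℓ := fun ℓ => min_le_left _ _
  have hW : ∀ ℓ, ∃ W ⊆ U ℓ, W.card = m ℓ := fun ℓ =>
    Finset.exists_subset_card_eq (hmle ℓ)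
  choose W hWU hWcard using hW
  have hP : ∀ ℓ, ∃ P ⊆ W ℓ, P.card = min (t ℓ) (m ℓ) := fun ℓ =>
    Finset.exists_subset_card_eq (by rw [hWcard]; exact min_le_right _ _)
  choose P hPW hPcard using hP
  have hQ : ∀ ℓ, ∃ Q ⊆ W ℓ \ P ℓ, Q.card = min (e ℓ) (m ℓ - min (t ℓ) (m ℓ)) := fun ℓ =>
    Finset.exists_subset_card_eq
      (by rw [Finset.card_sdiff_of_subset (hPW ℓ), hWcard, hPcard]; exact min_le_right _ _)
  choose Q hQW hQcard using hQ
  have hPU : ∀ ℓ, P ℓ ⊆ U ℓ := fun ℓ => (hPW ℓ).trans (hWU ℓ)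
  have hQW' : ∀ ℓ, Q ℓ ⊆ W ℓ := fun ℓ => (hQW ℓ).trans Finset.sdiff_subset
  have hQU : ∀ ℓ, Q ℓ ⊆ U ℓ := fun ℓ => (hQW' ℓ).trans (hWU ℓ)
  set T : Finset (Fin s) := Finset.univ.biUnion W with hT
  set Pall : Finset (Fin s) := Finset.univ.biUnion P with hPall
  set Qall : Finset (Fin s) := Finset.univ.biUnion Q with hQall
  -- localization of the global sets inside each `U ℓ`
  have hPloc : ∀ ℓ, ∀ i ∈ U ℓ, i ∈ Pall → i ∈ P ℓ := by
    intro ℓ i hiU hi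
    obtain ⟨ℓ', -, hℓ'⟩ := Finset.mem_biUnion.mp hi
    rcases eq_or_ne ℓ' ℓ with rfl | hne
    · exact hℓ'
    · exact absurd hiU (Finset.disjoint_left.mp (hU ℓ' ℓ hne) (hPU ℓ' hℓ'))
  have hQloc : ∀ ℓ, ∀ i ∈ U ℓ, i ∈ Qall → i ∈ Q ℓ := by
    intro ℓ i hiU hi
    obtain ⟨ℓ', -, hℓ'⟩ := Finset.mem_biUnion.mp hi
    rcases eq_or_ne ℓ' ℓ with rfl | hne
    · exact hℓ'
    · exact absurd hiU (Finset.disjoint_left.mp (hU ℓ' ℓ hne) (hQU ℓ' hℓ'))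
  have hTcard : T.card = ∑ ℓ, m ℓ := by
    rw [hT, Finset.card_biUnion (fun ℓ _ ℓ' _ hne => (hU ℓ ℓ' hne).mono (hWU ℓ) (hWU ℓ'))]
    exact Finset.sum_congr rfl fun ℓ _ => hWcard ℓ
  -- the restriction map to the complement of `T`
  set g : (Fin n → Fin s → A) → (Fin n → {i // i ∈ (Tᶜ : Finset (Fin s))} → A) :=
    fun x k i => x k i.1 with hg
  have hginj : Set.InjOn g (C : Set (Fin n → Fin s → A)) := by
    intro x hx x' hx' hgxx'
    by_contra hne
    -- the common output word
    set y : Fin n → Fin s → Option A := fun k i =>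
      if i ∈ Pall then some (x' k i) else if i ∈ Qall then none else some (x k i) with hy
    have hyP : ∀ k i, i ∈ Pall → y k i = some (x' k i) := by
      intro k i h; simp [hy, h]
    have hyQ : ∀ k i, i ∉ Pall → i ∈ Qall → y k i = none := by
      intro k i h h'; simp [hy, h, h']
    have hyO : ∀ k i, i ∉ Pall → i ∉ Qall → y k i = some (x k i) := by
      intro k i h h'; simp [hy, h, h']
    have hxx' : ∀ k, ∀ i, i ∉ T → x k i = x' k i := by
      intro k i hi
      have := congrFun (congrFun hgxx' k) ⟨i, Finset.mem_compl.mpr hi⟩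
      exact this
    -- `y` lies in the fan-out set of `x`
    have hy1 : y ∈ HBcomp (A := A) t e U n x := by
      refine Set.mem_iUnion.mpr ⟨fun ℓ => P ℓ ∪ Q ℓ, Set.mem_iUnion.mpr
        ⟨fun ℓ => ⟨Finset.union_subset (hPU ℓ) (hQU ℓ), ?_⟩, ?_⟩⟩
      · calc (P ℓ ∪ Q ℓ).card ≤ (P ℓ).card + (Q ℓ).card := Finset.card_union_le _ _
          _ ≤ t ℓ + e ℓ := by
              rw [hPcard, hQcard]; exact Nat.add_le_add (min_le_left _ _) (min_le_left _ _)
      · intro k _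
        refine ⟨?_, fun ℓ => ⟨?_, ?_⟩⟩
        · intro i hi
          have hiP : i ∉ Pall := by
            intro h
            obtain ⟨ℓ', -, hℓ'⟩ := Finset.mem_biUnion.mp h
            exact hi ℓ' (Finset.mem_union_left _ hℓ')
          have hiQ : i ∉ Qall := by
            intro h
            obtain ⟨ℓ', -, hℓ'⟩ := Finset.mem_biUnion.mp h
            exact hi ℓ' (Finset.mem_union_right _ hℓ')
          exact hyO k i hiP hiQ
        · -- discrepancy w.r.t. `x` over `P ℓ ∪ Q ℓ`
          have hsub : ((P ℓ ∪ Q ℓ).filter fun i =>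
              y k i ≠ none ∧ y k i ≠ some (x k i)) ⊆ P ℓ := by
            intro i hi
            simp only [Finset.mem_filter, Finset.mem_union] at hi
            obtain ⟨hi1, hi2, hi3⟩ := hi
            rcases hi1 with hiP | hiQ
            · exact hiP
            · exfalso
              have hiU : i ∈ U ℓ := hQU ℓ hiQ
              have hinP : i ∉ Pall := by
                intro h
                exact (Finset.mem_sdiff.mp (hQW ℓ hiQ)).2 (hPloc ℓ i hiU h)
              have hiQall : i ∈ Qall := Finset.mem_biUnion.mpr ⟨ℓ, Finset.mem_univ _, hiQ⟩
              exact hi2 (hyQ k i hinP hiQall)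
          calc discrepancy (y k) (x k) (P ℓ ∪ Q ℓ) ≤ (P ℓ).card :=
                Finset.card_le_card hsub
            _ ≤ t ℓ := by rw [hPcard]; exact min_le_left _ _
        · -- erasure weight over `P ℓ ∪ Q ℓ`
          have hsub : ((P ℓ ∪ Q ℓ).filter fun i => y k i = none) ⊆ Q ℓ := by
            intro i hi
            simp only [Finset.mem_filter, Finset.mem_union] at hi
            obtain ⟨hi1, hi2⟩ := hi
            have hinP : i ∉ Pall := by
              intro h
              rw [hyP k i h] at hi2
              exact Option.some_ne_none _ hi2
            have hiQall : i ∈ Qall := by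
              by_contra h
              rw [hyO k i hinP h] at hi2
              exact Option.some_ne_none _ hi2
            have hiU : i ∈ U ℓ := by
              rcases hi1 with h | h
              · exact hPU ℓ h
              · exact hQU ℓ h
            exact hQloc ℓ i hiU hiQall
          calc erasureWeight (y k) (P ℓ ∪ Q ℓ) ≤ (Q ℓ).card :=
                Finset.card_le_card hsub
            _ ≤ e ℓ := by rw [hQcard]; exact min_le_left _ _
    -- `y` also lies in the fan-out set of `x'`
    have hy2 : y ∈ HBcomp (A := A) t e U n x' := by
      refine Set.mem_iUnion.mpr ⟨fun ℓ => W ℓ \ P ℓ, Set.mem_iUnion.mpr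
        ⟨fun ℓ => ⟨Finset.sdiff_subset.trans (hWU ℓ), ?_⟩, ?_⟩⟩
      · rw [Finset.card_sdiff_of_subset (hPW ℓ), hWcard, hPcard]
        have := hm2te ℓ
        omega
      · intro k _
        refine ⟨?_, fun ℓ => ⟨?_, ?_⟩⟩
        · intro i hi
          by_cases hiP : i ∈ Pall
          · exact hyP k i hiP
          · have hinW : ∀ ℓ, i ∉ W ℓ := by
              intro ℓ hWi
              have hinPℓ : i ∉ P ℓ := fun h =>
                hiP (Finset.mem_biUnion.mpr ⟨ℓ, Finset.mem_univ _, h⟩)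
              exact hi ℓ (Finset.mem_sdiff.mpr ⟨hWi, hinPℓ⟩)
            have hinT : i ∉ T := by
              intro h
              obtain ⟨ℓ', -, h'⟩ := Finset.mem_biUnion.mp h
              exact hinW ℓ' h'
            have hinQ : i ∉ Qall := by
              intro h
              obtain ⟨ℓ', -, h'⟩ := Finset.mem_biUnion.mp h
              exact hinW ℓ' (hQW' ℓ' h')
            rw [hyO k i hiP hinQ, hxx' k i hinT]
        · -- discrepancy w.r.t. `x'` over `W ℓ \ P ℓ`
          have hsub : ((W ℓ \ P ℓ).filter fun i =>
              y k i ≠ none ∧ y k i ≠ some (x' k i)) ⊆ (W ℓ \ P ℓ) \ Q ℓ := by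
            intro i hi
            simp only [Finset.mem_filter] at hi
            obtain ⟨hi1, hi2, hi3⟩ := hi
            refine Finset.mem_sdiff.mpr ⟨hi1, fun hiQ => ?_⟩
            have hiU : i ∈ U ℓ := hWU ℓ (Finset.mem_sdiff.mp hi1).1
            have hinP : i ∉ Pall := fun h =>
              (Finset.mem_sdiff.mp hi1).2 (hPloc ℓ i hiU h)
            have hiQall : i ∈ Qall := Finset.mem_biUnion.mpr ⟨ℓ, Finset.mem_univ _, hiQ⟩
            exact hi2 (hyQ k i hinP hiQall)
          calc discrepancy (y k) (x' k) (W ℓ \ P ℓ) ≤ ((W ℓ \ P ℓ) \ Q ℓ).card :=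
                Finset.card_le_card hsub
            _ ≤ t ℓ := by
                rw [Finset.card_sdiff_of_subset (hQW ℓ), Finset.card_sdiff_of_subset (hPW ℓ),
                  hWcard, hPcard, hQcard]
                have := hm2te ℓ
                omega
        · -- erasure weight over `W ℓ \ P ℓ`
          have hsub : ((W ℓ \ P ℓ).filter fun i => y k i = none) ⊆ Q ℓ := by
            intro i hi
            simp only [Finset.mem_filter] at hi
            obtain ⟨hi1, hi2⟩ := hi
            have hinP : i ∉ Pall := by
              intro h
              rw [hyP k i h] at hi2
              exact Option.some_ne_none _ hi2
            have hiQall : i ∈ Qall := by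
              by_contra h
              rw [hyO k i hinP h] at hi2
              exact Option.some_ne_none _ hi2
            exact hQloc ℓ i (hWU ℓ (Finset.mem_sdiff.mp hi1).1) hiQall
          calc erasureWeight (y k) (W ℓ \ P ℓ) ≤ (Q ℓ).card :=
                Finset.card_le_card hsub
            _ ≤ e ℓ := by rw [hQcard]; exact min_le_left _ _
    -- contradiction with goodness
    have hdisj := hC.2 x hx x' hx' hne
    have : y ∈ HBcomp (A := A) t e U n x ∩ HBcomp (A := A) t e U n x' := ⟨hy1, hy2⟩
    rw [hdisj] at this
    exact this
  -- conclude the cardinality bound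
  have hcard : C.card ≤ Fintype.card (Fin n → {i // i ∈ (Tᶜ : Finset (Fin s))} → A) := by
    rw [← Finset.card_univ]
    exact Finset.card_le_card_of_injOn g (fun a _ => Finset.mem_univ _) hginj
  calc C.card ≤ Fintype.card (Fin n → {i // i ∈ (Tᶜ : Finset (Fin s))} → A) := hcard
    _ = (Fintype.card A) ^ (n * (s - ∑ ℓ, m ℓ)) := by
        rw [Fintype.card_fun, Fintype.card_fun, Fintype.card_coe, Finset.card_compl,
          Fintype.card_fin, hTcard, Fintype.card_fin, ← pow_mul, mul_comm]

end Aux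

/-- `C(H^{n,rest}) ≤ n·(s − Σ_ℓ min{2t_ℓ+e_ℓ, |U_ℓ|})` for all `n ≥ 1`;
in particular `C(H) ≤ C0(H) ≤ C0_rest(H) ≤ s − Σ_ℓ min{2t_ℓ+e_ℓ, |U_ℓ|}`,
where `H = H_{t,e}⟨U⟩`. -/
theorem capBase_HBcomp_le {A : Type*} [Fintype A] [DecidableEq A]
    (hA : 2 ≤ Fintype.card A) {s L : ℕ} (hs : 1 ≤ s) (hL : 1 ≤ L)
    (U : Fin L → Finset (Fin s))
    (hU : ∀ ℓ ℓ', ℓ ≠ ℓ' → Disjoint (U ℓ) (U ℓ'))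
    (t e : Fin L → ℕ) :
    (∀ n : ℕ, 1 ≤ n →
      capBase (Fintype.card A) (HBcomp (A := A) t e U n)
        ≤ (n : ℝ) * ((s : ℝ) -
            ∑ ℓ : Fin L, ((min (2 * t ℓ + e ℓ) ((U ℓ).card) : ℕ) : ℝ))) ∧
    capBase (Fintype.card A) (HB (A := A) t e U)
      ≤ zeroCapBase (Fintype.card A) (HB (A := A) t e U) ∧
    zeroCapBase (Fintype.card A) (HB (A := A) t e U)
      ≤ compoundCapBase A (Fintype.card A) t e U ∧
    compoundCapBase A (Fintype.card A) t e U
      ≤ (s : ℝ) - ∑ ℓ : Fin L, ((min (2 * t ℓ + e ℓ) ((U ℓ).card) : ℕ) : ℝ) := by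
  classical
  set q := Fintype.card A with hq
  set B : ℝ := (s : ℝ) - ∑ ℓ : Fin L, ((min (2 * t ℓ + e ℓ) ((U ℓ).card) : ℕ) : ℝ) with hB
  have hsum : (∑ ℓ, min (2 * t ℓ + e ℓ) ((U ℓ).card)) ≤ s := by
    calc ∑ ℓ, min (2 * t ℓ + e ℓ) ((U ℓ).card) ≤ ∑ ℓ, (U ℓ).card :=
          Finset.sum_le_sum fun ℓ _ => min_le_right _ _
      _ = (Finset.univ.biUnion U).card :=
          (Finset.card_biUnion (fun ℓ _ ℓ' _ h => hU ℓ ℓ' h)).symm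
      _ ≤ Fintype.card (Fin s) := Finset.card_le_univ _
      _ = s := Fintype.card_fin s
  have hcast : ∀ n : ℕ,
      ((n * (s - ∑ ℓ, min (2 * t ℓ + e ℓ) ((U ℓ).card)) : ℕ) : ℝ) = (n : ℝ) * B := by
    intro n
    rw [Nat.cast_mul, Nat.cast_sub hsum, hB, Nat.cast_sum]
  have part1 : ∀ n : ℕ, capBase q (HBcomp (A := A) t e U n) ≤ (n : ℝ) * B := by
    intro n
    have := capBase_le_of_card' hA (HBcomp (A := A) t e U n)
      (n * (s - ∑ ℓ, min (2 * t ℓ + e ℓ) ((U ℓ).card)))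
      (fun C hC => goodCode_card_le U hU t e n C hC)
    rwa [hcast n] at this
  have powle : ∀ n : ℕ, capBase q (chPow (HB (A := A) t e U) n)
      ≤ capBase q (HBcomp (A := A) t e U n) := by
    intro n
    refine capBase_mono' hA _ _ ?_
    refine csSup_le' ?_
    rintro b ⟨C, ⟨hne, hd⟩, rfl⟩
    refine le_csSup (maxGoodCode_bddAbove' _) ⟨C, ⟨hne, ?_⟩, rfl⟩
    intro x hx x' hx' hxx
    have hd' := hd x hx x' hx' hxx
    rw [Set.eq_empty_iff_forall_notMem] at hd' ⊢
    intro y hy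
    exact hd' y ⟨HBcomp_subset t e U hU n x hy.1, HBcomp_subset t e U hU n x' hy.2⟩
  have hBddcomp : BddAbove
      {r : ℝ | ∃ n : ℕ, 1 ≤ n ∧ r = capBase q (HBcomp (A := A) t e U n) / n} := by
    refine ⟨B, ?_⟩
    rintro r ⟨n, hn, rfl⟩
    have hnpos : (0 : ℝ) < n := by exact_mod_cast hn
    rw [div_le_iff₀ hnpos]
    calc capBase q (HBcomp (A := A) t e U n) ≤ (n : ℝ) * B := part1 n
      _ = B * n := mul_comm _ _
  have part4 : compoundCapBase A q t e U ≤ B := by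
    unfold compoundCapBase
    refine csSup_le ⟨_, 1, le_refl 1, rfl⟩ ?_
    rintro r ⟨n, hn, rfl⟩
    have hnpos : (0 : ℝ) < n := by exact_mod_cast hn
    rw [div_le_iff₀ hnpos]
    calc capBase q (HBcomp (A := A) t e U n) ≤ (n : ℝ) * B := part1 n
      _ = B * n := mul_comm _ _
  have hmemcomp : ∀ n : ℕ, 1 ≤ n →
      capBase q (HBcomp (A := A) t e U n) / n ≤ compoundCapBase A q t e U := by
    intro n hn
    exact le_csSup hBddcomp ⟨n, hn, rfl⟩
  have part3 : zeroCapBase q (HB (A := A) t e U) ≤ compoundCapBase A q t e U := by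
    unfold zeroCapBase
    refine csSup_le ⟨_, 1, le_refl 1, rfl⟩ ?_
    rintro r ⟨n, hn, rfl⟩
    refine le_trans ?_ (hmemcomp n hn)
    have hnpos : (0 : ℝ) < n := by exact_mod_cast hn
    exact div_le_div_of_nonneg_right (powle n) hnpos.le
  have hBddzero : BddAbove
      {r : ℝ | ∃ n : ℕ, 1 ≤ n ∧ r = capBase q (chPow (HB (A := A) t e U) n) / n} := by
    refine ⟨B, ?_⟩
    rintro r ⟨n, hn, rfl⟩
    have hnpos : (0 : ℝ) < n := by exact_mod_cast hn
    rw [div_le_iff₀ hnpos]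
    calc capBase q (chPow (HB (A := A) t e U) n)
        ≤ capBase q (HBcomp (A := A) t e U n) := powle n
      _ ≤ (n : ℝ) * B := part1 n
      _ = B * n := mul_comm _ _
  have part2 : capBase q (HB (A := A) t e U) ≤ zeroCapBase q (HB (A := A) t e U) := by
    have h1 : capBase q (HB (A := A) t e U) ≤ capBase q (chPow (HB (A := A) t e U) 1) := by
      refine capBase_mono' hA _ _ ?_
      refine csSup_le' ?_
      rintro b ⟨C, ⟨hne, hd⟩, rfl⟩
      have hinj : Function.Injective (fun (x : Fin s → A) (_ : Fin 1) => x) := by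
        intro a b h
        exact congrFun h 0
      refine le_csSup (maxGoodCode_bddAbove' _)
        ⟨C.image (fun x _ => x), ⟨hne.image _, ?_⟩, Finset.card_image_of_injective C hinj⟩
      intro z hz z' hz' hzz
      obtain ⟨x, hx, rfl⟩ := Finset.mem_image.mp hz
      obtain ⟨x', hx', rfl⟩ := Finset.mem_image.mp hz'
      have hxx : x ≠ x' := fun h => hzz (by rw [h])
      have hd' := hd x hx x' hx' hxx
      rw [Set.eq_empty_iff_forall_notMem] at hd' ⊢
      intro w hw
      exact hd' (w 0) ⟨hw.1 0 (Set.mem_univ 0), hw.2 0 (Set.mem_univ 0)⟩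
    have h2 : capBase q (chPow (HB (A := A) t e U) 1) / ((1 : ℕ) : ℝ)
        ≤ zeroCapBase q (HB (A := A) t e U) := by
      unfold zeroCapBase
      exact le_csSup hBddzero ⟨1, le_refl 1, rfl⟩
    rw [Nat.cast_one, div_one] at h2
    exact h1.trans h2
  exact ⟨fun n _ => part1 n, part2, part3, part4⟩
end
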